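/- Let h be a lowest weight element of the *-crystal on fully-commutative decreasing factorizations, with factors h^m, ..., h^r (factors below r empty) of lengths λ_m ≥ λ_{m-1} ≥ ... ≥ λ_r, where h^j = (h^j_{λ_j} ... h^j_1) in decreasing order. Then the *-insertion tableau of h has its i-th row (from the bottom) equal to h^{m+1-i}_1, h^{m+1-i}_2, ..., h^{m+1-i}_{λ_{m+1-i}}. -/

import Mathlib

/-- One elementary relation of the 0-Hecke monoid applied somewhere inside a word
(letters are positive integers; `p + 1 < q ∨ q + 1 < p` encodes `|p - q| > 1`). -/
inductive HeckeStep : List ℕ → List ℕ → Prop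
  | comm (u v : List ℕ) (p q : ℕ) (hpq : p + 1 < q ∨ q + 1 < p) :
      HeckeStep (u ++ p :: q :: v) (u ++ q :: p :: v)
  | braid (u v : List ℕ) (p q : ℕ) :
      HeckeStep (u ++ p :: q :: p :: v) (u ++ q :: p :: q :: v)
  | idem (u v : List ℕ) (p : ℕ) :
      HeckeStep (u ++ p :: p :: v) (u ++ p :: v)

/-- 0-Hecke equivalence of words. -/
def HeckeEquiv : List ℕ → List ℕ → Prop := Relation.EqvGen HeckeStep

/-- A word contains a consecutive braid subword `i (i+1) i` or `(i+1) i (i+1)`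
(the latter is the form `i (i-1) i`). -/
def ContainsBraid (w : List ℕ) : Prop :=
  ∃ (u v : List ℕ) (i : ℕ),
    w = u ++ i :: (i+1) :: i :: v ∨ w = u ++ (i+1) :: i :: (i+1) :: v

/-- A word is fully-commutative if no 0-Hecke equivalent word contains a
consecutive braid subword. -/
def FullyCommutative (w : List ℕ) : Prop :=
  ∀ w', HeckeEquiv w w' → ¬ ContainsBraid w'

/-- The strictly decreasing word whose letters are the given finite set. -/
def descWord (s : Finset ℕ) : List ℕ := (s.sort (· ≤ ·)).reverse

/-- The Hecke word `h^m ⋯ h^2 h^1` of a decreasing factorization into `m` factors,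
where (0-indexed) `h j` is the factor `h^{j+1}`; each factor is read as a strictly
decreasing word. -/
def factorWord (m : ℕ) (h : ℕ → Finset ℕ) : List ℕ :=
  ((List.range m).reverse.map (fun j => descWord (h j))).flatten

/-- Pairing process: the letters of the upper factor, given as a list (largest
first), successively pair with the smallest yet-unpaired letter `≥` them in the
lower factor `rest`; returns the set of unpaired letters of the lower factor. -/
def pairAux : List ℕ → Finset ℕ → Finset ℕ
  | [], rest => rest
  | x :: xs, rest =>
    if hc : (rest.filter (fun a => x ≤ a)).Nonempty then
      pairAux xs (rest.erase ((rest.filter (fun a => x ≤ a)).min' hc))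
    else pairAux xs rest

/-- Unpaired letters of the lower factor `a = h^i` after pairing with the upper
factor `b = h^{i+1}`. -/
def unpairedLow (a b : Finset ℕ) : Finset ℕ := pairAux (descWord b) a

/-- The crystal operator `f^⋆` on the pair of factors `(a, b) = (h^i, h^{i+1})`. -/
def fStarPair (a b : Finset ℕ) : Option (Finset ℕ × Finset ℕ) :=
  if hU : (unpairedLow a b).Nonempty then
    let x := (unpairedLow a b).max' hU
    if x + 1 ∈ a ∧ x + 1 ∈ b then some (a.erase (x+1), insert x b)
    else some (a.erase x, insert x b)
  else none

/-- The crystal operator `f_{i+1}^⋆` (0-indexed `i`), acting on the factors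
`h i` and `h (i+1)` of a decreasing factorization. -/
def fStar (i : ℕ) (h : ℕ → Finset ℕ) : Option (ℕ → Finset ℕ) :=
  match fStarPair (h i) (h (i+1)) with
  | none => none
  | some (a, b) => some (Function.update (Function.update h i a) (i+1) b)

/-- The smallest entry of `R` that is larger than `x` (junk value `0` if none). -/
def minGT (R : List ℕ) (x : ℕ) : ℕ := ((R.filter (fun y => x < y)).min?).getD 0

/-- The smallest `y ≤ x` such that the whole interval `[y, x]` is contained in `R`. -/
noncomputable def intervalMin (R : List ℕ) (x : ℕ) : ℕ :=
  sInf {y | y ≤ x ∧ ∀ z, y ≤ z → z ≤ x → z ∈ R}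

/-- `⋆`-insertion of a letter `x` into a single row `R`: returns the new row and
the letter (if any) bumped into the next row.  Case 1: if `R` is empty or
`x > max R`, append `x`.  Case 3: if `x ∈ R`, leave `R` unchanged and bump the
smallest `y` with `[y,x] ⊆ R`.  Case 2: otherwise replace the smallest `y > x`
by `x` and bump `y`. -/
noncomputable def insertRow (R : List ℕ) (x : ℕ) : List ℕ × Option ℕ :=
  if ∀ y ∈ R, y < x then (R ++ [x], none)
  else if x ∈ R then (R, some (intervalMin R x))
  else (R.map (fun y => if y = minGT R x then x else y), some (minGT R x))

/-- `⋆`-insertion of a letter into a tableau, whose rows are listed bottom row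
first (French notation). -/
noncomputable def insertTab : List (List ℕ) → ℕ → List (List ℕ)
  | [], x => [[x]]
  | R :: rest, x =>
    match (insertRow R x).2 with
    | none => (insertRow R x).1 :: rest
    | some y => (insertRow R x).1 :: insertTab rest y

/-- The row reading word: rows are read from the top row down (French notation),
each row from left to right. -/
def rowWord (T : List (List ℕ)) : List ℕ := T.reverse.flatten

/-- `T` (rows listed bottom row first) is a tableau with strictly increasing rows
whose transpose is semistandard: rows are nonempty with weakly decreasing lengths
going up, rows strictly increase, and columns weakly increase going up. -/
def TransposeSSYT (T : List (List ℕ)) : Prop :=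
  (∀ R ∈ T, R ≠ []) ∧
  List.Chain' (fun a b => b ≤ a) (T.map List.length) ∧
  (∀ R ∈ T, List.Chain' (· < ·) R) ∧
  (∀ r c, r + 1 < T.length → c < (T.getD (r+1) []).length →
    (T.getD r []).getD c 0 ≤ (T.getD (r+1) []).getD c 0)

/-- `T` (rows listed bottom row first) is a semistandard Young tableau: rows are
nonempty with weakly decreasing lengths going up, rows weakly increase, and
columns strictly increase going up. -/
def IsSSYT (T : List (List ℕ)) : Prop :=
  (∀ R ∈ T, R ≠ []) ∧
  List.Chain' (fun a b => b ≤ a) (T.map List.length) ∧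
  (∀ R ∈ T, List.Chain' (· ≤ ·) R) ∧
  (∀ r c, r + 1 < T.length → c < (T.getD (r+1) []).length →
    (T.getD r []).getD c 0 < (T.getD (r+1) []).getD c 0)

/-- The `⋆`-insertion tableau of a decreasing factorization with `m` factors,
inserting its Hecke word from right to left. -/
noncomputable def starPFac (m : ℕ) (h : ℕ → Finset ℕ) : List (List ℕ) :=
  ((List.range m).flatMap (fun j => Finset.sort (h j) (· ≤ ·))).foldl insertTab []


/-!
Let `A_j` be the increasing word of the factor `h j`; the word inserted is `A_0 A_1 ⋯ A_{m-1}`.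
Lowest weight means that every letter of `h j` is paired with a letter of `h (j+1)`, which makes
`B = A_{j+1}` dominate `A = A_j` entrywise: `B[k] ≤ A[k]`. Full commutativity of the word of the two
factors excludes the braid `(y+1) y (y+1)`, which forces `B[k-1] + 1 < B[k]` whenever
`B[k] = A[k]`. Under these two conditions inserting `B` into a tableau with bottom row `A` rewrites
that row into `B` letter by letter, each letter of `B` bumping the letter of `A` in its place; so `A`
is reinserted into the rows above, which by induction reproduces the tableau already built.
-/

theorem HeckeStep.append_append {w w' : List ℕ} (u v : List ℕ) (h : HeckeStep w w') :
    HeckeStep (u ++ w ++ v) (u ++ w' ++ v) := by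
  cases h with
  | comm u' v' p q hpq => simpa using HeckeStep.comm (u ++ u') (v' ++ v) p q hpq
  | braid u' v' p q => simpa using HeckeStep.braid (u ++ u') (v' ++ v) p q
  | idem u' v' p => simpa using HeckeStep.idem (u ++ u') (v' ++ v) p

theorem HeckeEquiv.append_append {w w' : List ℕ} (u v : List ℕ) (h : HeckeEquiv w w') :
    HeckeEquiv (u ++ w ++ v) (u ++ w' ++ v) := by
  induction h with
  | rel _ _ hxy => exact .rel _ _ (hxy.append_append u v)
  | refl => exact .refl _
  | symm _ _ _ ih => exact .symm _ _ ih
  | trans _ _ _ _ _ ih₁ ih₂ => exact .trans _ _ _ ih₁ ih₂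

theorem heckeEquiv_cons_append_singleton {x : ℕ} {T : List ℕ}
    (hfar : ∀ t ∈ T, x + 1 < t ∨ t + 1 < x) : HeckeEquiv (x :: T) (T ++ [x]) := by
  induction T with
  | nil => exact .refl _
  | cons t T ih =>
    have hswap : HeckeEquiv (x :: t :: T) (t :: x :: T) :=
      .rel _ _ (by simpa using HeckeStep.comm [] T x t (hfar t (by simp)))
    have hmove := (ih fun t' ht' => hfar t' (by simp [ht'])).append_append [t] []
    exact .trans _ _ _ hswap (by simpa [HeckeEquiv] using hmove)

theorem FullyCommutative.of_append_append {u w v : List ℕ} (h : FullyCommutative (u ++ w ++ v)) :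
    FullyCommutative w := by
  rintro w' hw' ⟨u', v', i, hi | hi⟩
  · exact h _ (hw'.append_append u v) ⟨u ++ u', v' ++ v, i, .inl (by simp [hi])⟩
  · exact h _ (hw'.append_append u v) ⟨u ++ u', v' ++ v, i, .inr (by simp [hi])⟩

/-- The second `y + 1` commutes leftwards through `T` to complete the braid `(y+1) y (y+1)`. -/
theorem not_fullyCommutative_of_far (P T Q : List ℕ) (y : ℕ)
    (hfar : ∀ t ∈ T, t + 1 < y + 1 ∨ y + 2 < t) :
    ¬ FullyCommutative (P ++ (y + 1) :: y :: T ++ (y + 1) :: Q) := by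
  intro hfc
  have hmove : HeckeEquiv (T ++ [y + 1]) ((y + 1) :: T) :=
    .symm _ _ (heckeEquiv_cons_append_singleton fun t ht => (hfar t ht).symm)
  refine hfc _ (by simpa using hmove.append_append (P ++ [y + 1, y]) Q)
    ⟨P, T ++ Q, y, .inr (by simp)⟩

theorem List.Pairwise.exists_eq_append_cons {α : Type*} {R : α → α → Prop} {l : List α}
    (hl : l.Pairwise R) {x : α} (hx : x ∈ l) :
    ∃ l₁ l₂, l = l₁ ++ x :: l₂ ∧ (∀ a ∈ l₁, R a x) ∧ ∀ b ∈ l₂, R x b := by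
  obtain ⟨l₁, l₂, rfl⟩ := List.append_of_mem hx
  rw [List.pairwise_append, List.pairwise_cons] at hl
  exact ⟨l₁, l₂, rfl, fun a ha => hl.2.2 a ha x (by simp), hl.2.1.1⟩

/-- Otherwise the word is `⋯ (y+1) y T (y+1) ⋯` with every letter of `T` far from `y + 1`. -/
theorem add_two_mem_of_fullyCommutative {A B : List ℕ} (hA : A.Pairwise (· < ·))
    (hB : B.Pairwise (· < ·)) (hfc : FullyCommutative (B.reverse ++ A.reverse)) {y : ℕ}
    (hyB : y ∈ B) (hy1B : y + 1 ∈ B) (hy1A : y + 1 ∈ A) : y + 2 ∈ A := by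
  by_contra hy2A
  obtain ⟨B₁, B', rfl, hB₁, hB'⟩ := hB.exists_eq_append_cons hyB
  have hy1B' : y + 1 ∈ B' := by
    rcases List.mem_append.mp hy1B with h | h
    · exact absurd (hB₁ _ h) (by omega)
    · simpa using h
  have hB'sorted : B'.Pairwise (· < ·) := (List.pairwise_cons.mp (List.pairwise_append.mp hB).2.1).2
  obtain ⟨C, B₂, rfl, hC, -⟩ := hB'sorted.exists_eq_append_cons hy1B'
  obtain rfl : C = [] := List.eq_nil_iff_forall_not_mem.mpr fun c hc => by
    have := hB' c (by simp [hc]); have := hC c hc; omega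
  obtain ⟨A₁, A₂, rfl, -, hA₂⟩ := hA.exists_eq_append_cons hy1A
  refine not_fullyCommutative_of_far B₂.reverse (B₁.reverse ++ A₂.reverse) A₁.reverse y ?_
    (by simpa using hfc)
  intro t ht
  rcases List.mem_append.mp ht with h | h
  · have := hB₁ t (by simpa using h); omega
  · have := hA₂ t (by simpa using h)
    have : t ≠ y + 2 := fun he => hy2A (by simp [← he, List.mem_reverse.mp h])
    omega

theorem intervalMin_eq_self {R : List ℕ} {x : ℕ} (hx : x ∈ R) (hprev : ∀ y, y + 1 = x → y ∉ R) :
    intervalMin R x = x := by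
  have hxS : x ∈ {y | y ≤ x ∧ ∀ z, y ≤ z → z ≤ x → z ∈ R} :=
    ⟨le_rfl, fun z h₁ h₂ => le_antisymm h₂ h₁ ▸ hx⟩
  have hmem := Nat.sInf_mem ⟨x, hxS⟩
  refine le_antisymm (Nat.sInf_le hxS) (not_lt.mp fun hlt => ?_)
  change sInf _ < x at hlt
  exact hprev (x - 1) (by omega) (hmem.2 (x - 1) (by omega) (by omega))

theorem minGT_append_cons {P A : List ℕ} {a x : ℕ} (hPx : ∀ y ∈ P, y ≤ x) (hxa : x < a)
    (hA : ∀ z ∈ A, a < z) : minGT (P ++ a :: A) x = a := by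
  have hfilter : (P ++ a :: A).filter (fun y => x < y) = a :: A := by
    rw [List.filter_append, List.filter_eq_nil_iff.mpr (by simpa using hPx),
      List.filter_eq_self.mpr (by simpa using ⟨hxa, fun z hz => hxa.trans (hA z hz)⟩)]
    rfl
  rw [minGT, hfilter,
    List.min?_eq_some_iff.mpr ⟨List.mem_cons_self, by simpa using fun z hz => (hA z hz).le⟩]
  rfl

theorem insertRow_of_forall_lt {R : List ℕ} {x : ℕ} (h : ∀ y ∈ R, y < x) :
    insertRow R x = (R ++ [x], none) := by
  rw [insertRow, if_pos h]

/-- Case 2 of row insertion if `b < a`; if `b = a`, case 3 bumps `b` itself since `b - 1` is not in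
the row. -/
theorem insertRow_bump {P A : List ℕ} {a b : ℕ} (hrow : (P ++ a :: A).Pairwise (· < ·))
    (hPb : ∀ y ∈ P, y < b) (hba : b ≤ a) (hgap : b = a → ∀ y ∈ P, y + 1 < b) :
    insertRow (P ++ a :: A) b = (P ++ b :: A, some a) := by
  have hA : ∀ z ∈ A, a < z := (List.pairwise_cons.mp (List.pairwise_append.mp hrow).2.1).1
  have hnotlt : ¬ ∀ y ∈ P ++ a :: A, y < b := fun h => absurd (h a (by simp)) (by omega)
  rcases hba.eq_or_lt with rfl | hlt
  · have hprev : ∀ y, y + 1 = b → y ∉ P ++ b :: A := by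
      intro y hy hmem
      rcases List.mem_append.mp hmem with h | h
      · have := hgap rfl y h; omega
      · rcases List.mem_cons.mp h with h | h
        · omega
        · have := hA y h; omega
    rw [insertRow, if_neg hnotlt, if_pos (by simp), intervalMin_eq_self (by simp) hprev]
  · have hbnot : b ∉ P ++ a :: A := by
      intro hmem
      rcases List.mem_append.mp hmem with h | h
      · exact absurd (hPb b h) (lt_irrefl b)
      · rcases List.mem_cons.mp h with h | h
        · omega
        · have := hA b h; omega
    have hPa : ∀ y ∈ P, y ≠ a := fun y hy => by have := hPb y hy; omega
    have hAa : ∀ y ∈ A, y ≠ a := fun y hy => by have := hA y hy; omega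
    rw [insertRow, if_neg hnotlt, if_neg hbnot, minGT_append_cons (fun y hy => (hPb y hy).le) hlt hA]
    simp only [List.map_append, List.map_cons]
    rw [List.map_congr_left (fun y hy => if_neg (hPa y hy)),
      List.map_congr_left (l := A) (fun y hy => if_neg (hAa y hy))]
    simp

theorem foldl_insertTab_of_forall_lt (B : List ℕ) : ∀ (R : List ℕ) (T : List (List ℕ)),
    (R ++ B).Pairwise (· < ·) → B.foldl insertTab (R :: T) = (R ++ B) :: T := by
  induction B with
  | nil => simp
  | cons x B ih =>
    intro R T hs
    have hRx : ∀ y ∈ R, y < x := fun y hy => (List.pairwise_append.mp hs).2.2 y hy x (by simp)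
    have hstep : insertTab (R :: T) x = (R ++ [x]) :: T := by
      rw [insertTab, insertRow_of_forall_lt hRx]
    rw [List.foldl_cons, hstep, ih (R ++ [x]) T (by simpa using hs)]
    simp

theorem foldl_insertTab_nil {A : List ℕ} (hs : A.Pairwise (· < ·)) (hne : A ≠ []) :
    A.foldl insertTab [] = [A] := by
  obtain ⟨x, A, rfl⟩ := List.exists_cons_of_ne_nil hne
  exact foldl_insertTab_of_forall_lt A [x] [] (by simpa using hs)

/-- `BumpsOut P B A`: inserting the letters of `B` into a row `P ++ A` (where `P` has already
been inserted) replaces `A` by `B` letter by letter, each insertion bumping the next letter of `A`;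
once `A` is used up the remaining letters of `B` are appended. -/
def BumpsOut : List ℕ → List ℕ → List ℕ → Prop
  | _, _, [] => True
  | _, [], _ :: _ => False
  | P, b :: B, a :: A => b ≤ a ∧ (b = a → ∀ y ∈ P, y + 1 < b) ∧ BumpsOut (P ++ [b]) B A

theorem foldl_insertTab_of_bumpsOut (B : List ℕ) : ∀ (P A : List ℕ) (T : List (List ℕ)),
    (P ++ B).Pairwise (· < ·) → (P ++ A).Pairwise (· < ·) → BumpsOut P B A →
    B.foldl insertTab ((P ++ A) :: T) = (P ++ B) :: A.foldl insertTab T := by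
  induction B with
  | nil =>
    rintro P (_ | ⟨a, A⟩) T - - hbump
    · simp
    · exact hbump.elim
  | cons b B ih =>
    rintro P (_ | ⟨a, A⟩) T hPB hPA hbump
    · simpa using foldl_insertTab_of_forall_lt (b :: B) P T hPB
    obtain ⟨hba, hgap, hbump⟩ := hbump
    have hPb : ∀ y ∈ P, y < b := fun y hy => (List.pairwise_append.mp hPB).2.2 y hy b (by simp)
    have hA : ∀ z ∈ A, a < z := (List.pairwise_cons.mp (List.pairwise_append.mp hPA).2.1).1
    have hPbA : (P ++ [b] ++ A).Pairwise (· < ·) := by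
      rw [List.append_assoc, List.singleton_append, List.pairwise_append, List.pairwise_cons]
      refine ⟨(List.pairwise_append.mp hPA).1,
        ⟨fun z hz => lt_of_le_of_lt hba (hA z hz),
          (List.pairwise_cons.mp (List.pairwise_append.mp hPA).2.1).2⟩, ?_⟩
      intro y hy z hz
      rcases List.mem_cons.mp hz with rfl | hz
      · exact hPb y hy
      · exact (List.pairwise_append.mp hPA).2.2 y hy z (by simp [hz])
    have hstep : insertTab ((P ++ a :: A) :: T) b = (P ++ b :: A) :: insertTab T a := by
      rw [insertTab, insertRow_bump hPA hPb hba hgap]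
    rw [List.foldl_cons, hstep]
    simpa using ih (P ++ [b]) A (insertTab T a) (by simpa using hPB) hPbA hbump

theorem foldl_insertTab_flatten_reverse : ∀ Ts : List (List ℕ),
    (∀ R ∈ Ts, R ≠ [] ∧ R.Pairwise (· < ·)) → Ts.IsChain (fun B A => BumpsOut [] B A) →
    Ts.reverse.flatten.foldl insertTab [] = Ts
  | [], _, _ => rfl
  | [A], hrows, _ => by
    simpa using foldl_insertTab_nil (hrows A (by simp)).2 (hrows A (by simp)).1
  | B :: A :: T, hrows, hchain => by
    have hAT := foldl_insertTab_flatten_reverse (A :: T) (fun R hR => hrows R (by simp [hR]))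
      hchain.tail
    have hT := foldl_insertTab_flatten_reverse T (fun R hR => hrows R (by simp [hR]))
      hchain.tail.tail
    simp only [List.reverse_cons, List.flatten_append, List.foldl_append, List.flatten_cons,
      List.flatten_nil, List.append_nil, hT] at hAT ⊢
    rw [hAT]
    simpa [hAT] using foldl_insertTab_of_bumpsOut B [] A T (by simpa using (hrows B (by simp)).2)
      (by simpa using (hrows A (by simp)).2) (List.isChain_cons_cons.mp hchain).1

/-- For increasing words: `B` is at least as long as `A` and entrywise weakly below it. -/
def Dominates (B A : List ℕ) : Prop := ∀ t, A.countP (· ≤ t) ≤ B.countP (· ≤ t)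

theorem Dominates.ne_nil {B A : List ℕ} {a : ℕ} (h : Dominates B (a :: A)) : B ≠ [] := by
  rintro rfl
  simpa using h a

theorem Dominates.head_le {B A : List ℕ} {a b : ℕ} (hB : (b :: B).Pairwise (· < ·))
    (h : Dominates (b :: B) (a :: A)) : b ≤ a := by
  by_contra! hab
  have hBa : B.countP (· ≤ a) = 0 :=
    List.countP_eq_zero.mpr fun z hz => by simpa using hab.trans ((List.pairwise_cons.mp hB).1 z hz)
  simpa [List.countP_cons, hBa, hab.not_ge] using h a

theorem Dominates.tail {B A : List ℕ} {a b : ℕ} (hA : (a :: A).Pairwise (· < ·)) (hba : b ≤ a)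
    (h : Dominates (b :: B) (a :: A)) : Dominates B A := by
  intro t
  by_cases hat : a ≤ t
  · simpa [List.countP_cons, hat, hba.trans hat] using h t
  · rw [List.countP_eq_zero.mpr fun z hz => by
      have := (List.pairwise_cons.mp hA).1 z hz; simp; omega]
    exact Nat.zero_le _

theorem countP_sort_eq_card_filter (s : Finset ℕ) (p : ℕ → Prop) [DecidablePred p] :
    (s.sort (· ≤ ·)).countP (fun x => decide (p x)) = (s.filter p).card := by
  rw [← Multiset.coe_countP, Finset.sort_eq, Multiset.countP_eq_card_filter]
  rfl

/-- Each pairing step removes at most one letter `≤ t` from the lower factor, and only when the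
upper letter paired is itself `≤ t`. -/
theorem card_filter_le_pairAux (t : ℕ) (xs : List ℕ) (rest : Finset ℕ) :
    (rest.filter (· ≤ t)).card ≤ ((pairAux xs rest).filter (· ≤ t)).card + xs.countP (· ≤ t) := by
  induction xs generalizing rest with
  | nil => simp [pairAux]
  | cons x xs ih =>
    rw [pairAux]
    split_ifs with hc
    · set y := (rest.filter (fun a => x ≤ a)).min' hc
      have hxy : x ≤ y := (Finset.mem_filter.mp (Finset.min'_mem _ hc)).2
      have hih := ih (rest.erase y)
      rw [Finset.filter_erase] at hih
      by_cases hxt : x ≤ t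
      · have := Finset.pred_card_le_card_erase (s := rest.filter (· ≤ t)) (a := y)
        simp only [List.countP_cons, hxt, decide_true, if_true]
        omega
      · have hy : y ∉ rest.filter (· ≤ t) := by simp; omega
        rw [Finset.erase_eq_of_notMem hy] at hih
        simpa [List.countP_cons, hxt] using hih
    · have := ih rest
      simp only [List.countP_cons]
      omega

theorem dominates_sort_of_unpairedLow_eq_empty {a b : Finset ℕ} (hp : unpairedLow a b = ∅) :
    Dominates (b.sort (· ≤ ·)) (a.sort (· ≤ ·)) := by
  intro t
  have h := card_filter_le_pairAux t (descWord b) a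
  rw [show pairAux (descWord b) a = unpairedLow a b from rfl, hp, descWord,
    List.countP_reverse] at h
  simpa [countP_sort_eq_card_filter] using h

/-- Otherwise `hstep` and domination would align `y + 2`, `y + 3`, … in both words forever. -/
theorem pred_not_mem_of_aligned {P A B : List ℕ} {y : ℕ}
    (hPB : (P ++ (y + 1) :: B).Pairwise (· < ·)) (hA : ((y + 1) :: A).Pairwise (· < ·))
    (hdom : Dominates ((y + 1) :: B) ((y + 1) :: A))
    (hstep : ∀ z ∈ P ++ (y + 1) :: B, z + 1 ∈ (y + 1) :: A → z + 1 ∈ (y + 1) :: B →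
      z + 2 ∈ (y + 1) :: A) : y ∉ P := by
  intro hy
  induction A generalizing P B y with
  | nil => simpa using hstep y (by simp [hy]) (by simp) (by simp)
  | cons a A ih =>
    have hA_gt := (List.pairwise_cons.mp hA.of_cons).1
    obtain rfl : a = y + 2 := by
      have := (List.pairwise_cons.mp hA).1 a (by simp)
      rcases List.mem_cons.mp (hstep y (by simp [hy]) (by simp) (by simp)) with h | h
      · omega
      rcases List.mem_cons.mp h with h | h
      · omega
      · have := hA_gt _ h; omega
    have hdom' := hdom.tail hA le_rfl
    obtain ⟨b, B, rfl⟩ := List.exists_cons_of_ne_nil hdom'.ne_nil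
    have hPyB : ((P ++ [y + 1]) ++ b :: B).Pairwise (· < ·) := by simpa using hPB
    obtain rfl : b = y + 2 := by
      have := hdom'.head_le (List.pairwise_append.mp hPyB).2.1
      have := (List.pairwise_append.mp hPyB).2.2 (y + 1) (by simp) b (by simp)
      omega
    refine ih hPyB hA.of_cons hdom' (fun z hz hz1A hz1B => ?_) (by simp)
    have hzy : y + 2 ≤ z + 1 := by
      rcases List.mem_cons.mp hz1A with h | h
      · omega
      · have := hA_gt _ h; omega
    rcases List.mem_cons.mp (hstep z (by simpa using hz) (by simp [hz1A]) (by simp [hz1B]))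
      with h | h
    · omega
    · exact h

theorem bumpsOut_of_dominates (A : List ℕ) : ∀ (P B : List ℕ),
    (P ++ B).Pairwise (· < ·) → A.Pairwise (· < ·) → Dominates B A →
    (∀ y ∈ P ++ B, y + 1 ∈ A → y + 1 ∈ B → y + 2 ∈ A) → BumpsOut P B A := by
  induction A with
  | nil => rintro P (_ | _) <;> simp [BumpsOut]
  | cons a A ih =>
    intro P B hPB hA hdom hstep
    obtain ⟨b, B, rfl⟩ := List.exists_cons_of_ne_nil hdom.ne_nil
    have hba := hdom.head_le (List.pairwise_append.mp hPB).2.1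
    refine ⟨hba, ?_, ih (P ++ [b]) B (by simpa using hPB) hA.of_cons (hdom.tail hA hba) ?_⟩
    · rintro rfl y hy
      have hyb : y < b := (List.pairwise_append.mp hPB).2.2 y hy b (by simp)
      by_contra hyb'
      obtain rfl : b = y + 1 := by omega
      exact pred_not_mem_of_aligned hPB hA hdom hstep hy
    · intro z hz hz1A hz1B
      have ha := (List.pairwise_cons.mp hA).1 _ hz1A
      have := hstep z (by simpa using hz) (by simp [hz1A]) (by simp [hz1B])
      rcases List.mem_cons.mp this with h | h
      · omega
      · exact h

theorem bumpsOut_sort {a b : Finset ℕ} (hp : unpairedLow a b = ∅)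
    (hfc : FullyCommutative (descWord b ++ descWord a)) :
    BumpsOut [] (b.sort (· ≤ ·)) (a.sort (· ≤ ·)) :=
  bumpsOut_of_dominates _ [] _ (by simpa using (Finset.sortedLT_sort b).pairwise)
    (Finset.sortedLT_sort a).pairwise (dominates_sort_of_unpairedLow_eq_empty hp)
    fun _ hy hy1A hy1B => add_two_mem_of_fullyCommutative (Finset.sortedLT_sort a).pairwise
      (Finset.sortedLT_sort b).pairwise hfc (by simpa using hy) hy1B hy1A

theorem unpairedLow_eq_empty_of_fStar_eq_none {j : ℕ} {h : ℕ → Finset ℕ}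
    (hf : fStar j h = none) : unpairedLow (h j) (h (j + 1)) = ∅ := by
  by_contra hne
  have hU := Finset.nonempty_iff_ne_empty.mpr hne
  unfold fStar at hf
  split at hf
  · next hp => simp only [fStarPair, dif_pos hU] at hp; split_ifs at hp
  · simp at hf

theorem FullyCommutative.adjacent_factors {m j : ℕ} {h : ℕ → Finset ℕ}
    (hfc : FullyCommutative (factorWord m h)) (hj : j + 1 < m) :
    FullyCommutative (descWord (h (j + 1)) ++ descWord (h j)) := by
  obtain ⟨k, rfl⟩ : ∃ k, m = j + 2 + k := ⟨m - (j + 2), by omega⟩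
  have hsplit : factorWord (j + 2 + k) h =
      (((List.range k).map (j + 2 + ·)).reverse.map (descWord ∘ h)).flatten ++
        (descWord (h (j + 1)) ++ descWord (h j)) ++
        ((List.range j).reverse.map (descWord ∘ h)).flatten := by
    simp [factorWord, List.range_add, List.range_succ, Function.comp_def]
  exact (hsplit ▸ hfc).of_append_append

theorem flatMap_range_eq_flatten_reverse {α : Type*} {m r : ℕ} (f : ℕ → List α) (hr : 1 ≤ r)
    (hrm : r ≤ m) (hf : ∀ j, j + 1 < r → f j = []) :
    (List.range m).flatMap f =
      ((List.range (m - r + 1)).map (fun i => f (m - 1 - i))).reverse.flatten := by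
  have hm : m = r - 1 + (m - r + 1) := by omega
  rw [← List.map_reverse, List.range_eq_range' (n := m - r + 1), List.reverse_range', List.map_map,
    ← List.flatMap_def]
  conv_lhs => rw [hm, List.range_add, List.flatMap_append, List.flatMap_map]
  rw [List.flatMap_eq_nil_iff.mpr fun j hj => hf j (by simp at hj; omega), List.nil_append]
  refine List.flatMap_congr fun i hi => ?_
  simp only [List.mem_range] at hi
  simp only [Function.comp_apply]
  congr 1
  omega

theorem lowest_weight_insertion_tableau_general (m r : ℕ) (h : ℕ → Finset ℕ)
    (hr : 1 ≤ r) (hrm : r ≤ m)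
    (hempty : ∀ j, j + 1 < r → h j = ∅)
    (hne : ∀ j, r - 1 ≤ j → j < m → (h j).Nonempty)
    (hfc : FullyCommutative (factorWord m h))
    (hlw : ∀ k, k + 1 < m → fStar k h = none) :
    starPFac m h =
      (List.range (m - r + 1)).map (fun i => Finset.sort (h (m - 1 - i)) (· ≤ ·)) := by
  set rows := (List.range (m - r + 1)).map (fun i => Finset.sort (h (m - 1 - i)) (· ≤ ·))
  have hrows : ∀ R ∈ rows, R ≠ [] ∧ R.Pairwise (· < ·) := by
    simp only [rows, List.mem_map, List.mem_range]
    rintro _ ⟨i, hi, rfl⟩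
    obtain ⟨x, hx⟩ := hne (m - 1 - i) (by omega) (by omega)
    exact ⟨List.ne_nil_of_mem ((Finset.mem_sort _).mpr hx), (Finset.sortedLT_sort _).pairwise⟩
  have hchain : rows.IsChain (fun B A => BumpsOut [] B A) := by
    refine (List.isChain_map _).mpr ((List.isChain_range_succ _ _).mpr fun i hi => ?_)
    have hj : m - 1 - (i + 1) + 1 = m - 1 - i := by omega
    have := bumpsOut_sort (unpairedLow_eq_empty_of_fStar_eq_none (hlw _ (by omega)))
      (hfc.adjacent_factors (j := m - 1 - (i + 1)) (by omega))
    rwa [hj] at this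
  rw [starPFac, flatMap_range_eq_flatten_reverse _ hr hrm fun j hj => by simp [hempty j hj]]
  exact foldl_insertTab_flatten_reverse rows hrows hchain

/-- For a lowest weight element `h = h^m ⋯ h^r` of the `⋆`-crystal (so all
`f_k^⋆` annihilate `h`, factors below `r` are empty and the factor lengths
weakly increase from `h^r` to `h^m`), the `i`-th row (from the bottom) of the
`⋆`-insertion tableau is `h^{m+1-i}_1, h^{m+1-i}_2, …`, i.e. the increasing word
of the factor `h^{m+1-i}`.  Factors are 0-indexed (`h^{j+1} = h j`). -/
theorem lowest_weight_insertion_tableau (m r : ℕ) (h : ℕ → Finset ℕ)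
    (hr : 1 ≤ r) (hrm : r ≤ m)
    (hempty : ∀ j, j + 1 < r → h j = ∅)
    (hne : ∀ j, r - 1 ≤ j → j < m → (h j).Nonempty)
    (hmono : ∀ j, r - 1 ≤ j → j + 1 < m → (h j).card ≤ (h (j+1)).card)
    (hfc : FullyCommutative (factorWord m h))
    (hlw : ∀ k, k + 1 < m → fStar k h = none) :
    starPFac m h =
      (List.range (m - r + 1)).map (fun i => Finset.sort (h (m - 1 - i)) (· ≤ ·)) :=
  lowest_weight_insertion_tableau_general m r h hr hrm hempty hne hfc hlw
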